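/- For Hermitian d×d matrices A and B, the vectors of increasingly ordered eigenvalues satisfy ‖λ↑(A) − λ↑(B)‖₂ ≤ ‖A − B‖₂, where ‖·‖₂ is the Frobenius norm. -/

import Mathlib

/-!
Write `A = U D Uᴴ`, `B = V E Vᴴ` with `D`, `E` the diagonal eigenvalue matrices and set
`W = Uᴴ V`. Then `‖A - B‖² = ‖A‖² + ‖B‖² - 2 Re tr(AB)`, `‖A‖² = Σ aᵢ²`, and
`Re tr(AB) = Σᵢⱼ aᵢ |Wᵢⱼ|² bⱼ`. The matrix `(|Wᵢⱼ|²)` is doubly stochastic, so by Birkhoff's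
theorem `Re tr(AB)` is a convex combination of the sums `Σᵢ aᵢ b_{σ i}` over permutations `σ`,
and by the rearrangement inequality each of these is at most `Σᵢ a↑ᵢ b↑ᵢ`, where `a↑`, `b↑` are
the sorted eigenvalue vectors. Expanding `Σᵢ (a↑ᵢ - b↑ᵢ)²` gives the claim.
-/

open Matrix

attribute [local instance] Matrix.frobeniusNormedAddCommGroup

/-- The increasingly ordered eigenvalues of a Hermitian matrix. -/
noncomputable def sortedEigs {d : ℕ} {A : Matrix (Fin d) (Fin d) ℂ} (hA : A.IsHermitian) :
    Fin d → ℝ :=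
  hA.eigenvalues ∘ Tuple.sort hA.eigenvalues

open Finset RCLike

section Rearrangement

variable {d : ℕ}

theorem sum_mul_comp_perm_le_sum_sort_mul_sort {α : Type*} [Semiring α] [LinearOrder α]
    [IsStrictOrderedRing α] [ExistsAddOfLE α] (f g : Fin d → α) (σ : Equiv.Perm (Fin d)) :
    ∑ i, f i * g (σ i) ≤ ∑ i, f (Tuple.sort f i) * g (Tuple.sort g i) := by
  set p := Tuple.sort f
  set q := Tuple.sort g
  have hreindex :
      ∑ i, f i * g (σ i) = ∑ i, f (p i) * g (q ((p.trans (σ.trans q.symm)) i)) := by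
    rw [← Equiv.sum_comp p]
    simp
  rw [hreindex]
  exact ((Tuple.monotone_sort f).monovary (Tuple.monotone_sort g)).sum_mul_comp_perm_le_sum_mul

theorem dotProduct_mulVec_le_sum_sort_mul_sort {R : Type*} [Field R] [LinearOrder R]
    [IsStrictOrderedRing R] {S : Matrix (Fin d) (Fin d) R} (hS : S ∈ doublyStochastic R (Fin d))
    (f g : Fin d → R) :
    f ⬝ᵥ (S *ᵥ g) ≤ ∑ i, f (Tuple.sort f i) * g (Tuple.sort g i) := by
  rw [← SetLike.mem_coe, doublyStochastic_eq_convexHull_permMatrix] at hS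
  have hlin : IsLinearMap R fun S : Matrix (Fin d) (Fin d) R => f ⬝ᵥ (S *ᵥ g) :=
    ⟨fun S T => by simp [add_mulVec, dotProduct_add],
      fun c S => by simp [smul_mulVec, dotProduct_smul]⟩
  refine convexHull_min ?_ (convex_halfSpace_le hlin _) hS
  rintro _ ⟨σ, rfl⟩
  simpa [permMatrix_mulVec, dotProduct] using sum_mul_comp_perm_le_sum_sort_mul_sort f g σ

end Rearrangement

namespace Matrix

variable {𝕜 m n : Type*} [RCLike 𝕜]

theorem re_mul_conjTranspose_apply_self [Fintype n] (W : Matrix m n 𝕜) (i : m) :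
    re ((W * Wᴴ) i i) = ∑ j, ‖W i j‖ ^ 2 := by
  simp [mul_apply, RCLike.mul_conj]

theorem re_conjTranspose_mul_apply_self [Fintype m] (W : Matrix m n 𝕜) (j : n) :
    re ((Wᴴ * W) j j) = ∑ i, ‖W i j‖ ^ 2 := by
  simp [mul_apply, RCLike.conj_mul]

theorem frobenius_norm_sq_eq_re_trace [Fintype m] [Fintype n] (A : Matrix m n 𝕜) :
    ‖A‖ ^ 2 = re (Aᴴ * A).trace := by
  rw [frobenius_norm_def, ← Real.sqrt_eq_rpow, Real.sq_sqrt (by positivity), trace, map_sum]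
  simp only [Real.rpow_two, diag_apply, re_conjTranspose_mul_apply_self]
  exact Finset.sum_comm

theorem frobenius_norm_sub_sq [Fintype m] [Fintype n] (A B : Matrix m n 𝕜) :
    ‖A - B‖ ^ 2 = ‖A‖ ^ 2 + ‖B‖ ^ 2 - 2 * re (Aᴴ * B).trace := by
  have hswap : re (Bᴴ * A).trace = re (Aᴴ * B).trace := by
    rw [← conjTranspose_conjTranspose A, ← conjTranspose_mul, trace_conjTranspose, star_def,
      conj_re, conjTranspose_conjTranspose]
  simp only [frobenius_norm_sq_eq_re_trace, conjTranspose_sub, Matrix.sub_mul, Matrix.mul_sub,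
    trace_sub, map_sub, hswap]
  ring

def unistochastic (W : Matrix m n 𝕜) : Matrix m n ℝ := of fun i j => ‖W i j‖ ^ 2

@[simp]
theorem unistochastic_apply (W : Matrix m n 𝕜) (i : m) (j : n) :
    unistochastic W i j = ‖W i j‖ ^ 2 :=
  rfl

theorem unistochastic_one [DecidableEq n] : unistochastic (1 : Matrix n n 𝕜) = 1 := by
  ext i j
  by_cases h : i = j <;> simp [one_apply, h]

theorem unistochastic_mem_doublyStochastic [Fintype n] [DecidableEq n] {W : Matrix n n 𝕜}
    (hW : W ∈ unitaryGroup n 𝕜) : unistochastic W ∈ doublyStochastic ℝ n := by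
  refine mem_doublyStochastic_iff_sum.mpr ⟨fun _ _ => sq_nonneg _, fun i => ?_, fun j => ?_⟩
  · rw [funext (unistochastic_apply W i), ← re_mul_conjTranspose_apply_self,
      ← star_eq_conjTranspose, Unitary.mul_star_self_of_mem hW, one_apply_eq, one_re]
  · rw [funext (unistochastic_apply W · j), ← re_conjTranspose_mul_apply_self,
      ← star_eq_conjTranspose, Unitary.star_mul_self_of_mem hW, one_apply_eq, one_re]

theorem re_trace_diagonal_mul_diagonal_mul_conjTranspose [Fintype n] [DecidableEq n]
    (a b : n → ℝ) (W : Matrix n n 𝕜) :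
    re (diagonal (ofReal ∘ a) * W * diagonal (ofReal ∘ b) * Wᴴ).trace =
      a ⬝ᵥ (unistochastic W *ᵥ b) := by
  simp only [trace, diag_apply, map_sum, dotProduct, mulVec, Finset.mul_sum]
  refine Finset.sum_congr rfl fun i _ => ?_
  rw [mul_apply, map_sum]
  refine Finset.sum_congr rfl fun j _ => ?_
  rw [mul_diagonal, diagonal_mul, conjTranspose_apply, unistochastic_apply]
  have hreal :
      (a i : 𝕜) * W i j * b j * star (W i j) = ((a i * (‖W i j‖ ^ 2 * b j) : ℝ) : 𝕜) := by
    rw [star_def, mul_right_comm _ (b j : 𝕜), mul_assoc _ (W i j), mul_conj]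
    push_cast
    ring
  simp only [Function.comp_apply, hreal, ofReal_re]

namespace IsHermitian

variable [Fintype n] [DecidableEq n] {A B : Matrix n n 𝕜}

theorem re_trace_mul_eq (hA : A.IsHermitian) (hB : B.IsHermitian) :
    re (A * B).trace = hA.eigenvalues ⬝ᵥ
      (unistochastic ((hA.eigenvectorUnitary : Matrix n n 𝕜)ᴴ *
        (hB.eigenvectorUnitary : Matrix n n 𝕜)) *ᵥ hB.eigenvalues) := by
  rw [← re_trace_diagonal_mul_diagonal_mul_conjTranspose, conjTranspose_mul,
    conjTranspose_conjTranspose]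
  conv_lhs => rw [hA.spectral_theorem, hB.spectral_theorem]
  simp only [Unitary.conjStarAlgAut_apply, star_eq_conjTranspose, Matrix.mul_assoc]
  rw [trace_mul_comm]
  simp only [Matrix.mul_assoc]

theorem frobenius_norm_sq_eq_sum_eigenvalues_sq (hA : A.IsHermitian) :
    ‖A‖ ^ 2 = ∑ i, hA.eigenvalues i ^ 2 := by
  rw [frobenius_norm_sq_eq_re_trace, hA.eq, re_trace_mul_eq hA hA, ← star_eq_conjTranspose,
    Unitary.coe_star_mul_self, unistochastic_one, one_mulVec]
  simp [dotProduct, sq]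

end IsHermitian

end Matrix

section SortedEigenvalues

variable {d : ℕ} {A B : Matrix (Fin d) (Fin d) ℂ}

theorem sum_sortedEigs_sq (hA : A.IsHermitian) : ∑ i, sortedEigs hA i ^ 2 = ‖A‖ ^ 2 := by
  rw [hA.frobenius_norm_sq_eq_sum_eigenvalues_sq]
  exact Equiv.sum_comp (Tuple.sort hA.eigenvalues) (hA.eigenvalues · ^ 2)

theorem re_trace_mul_le_sum_sortedEigs_mul (hA : A.IsHermitian) (hB : B.IsHermitian) :
    re (A * B).trace ≤ ∑ i, sortedEigs hA i * sortedEigs hB i := by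
  rw [hA.re_trace_mul_eq hB]
  refine dotProduct_mulVec_le_sum_sort_mul_sort (unistochastic_mem_doublyStochastic ?_) _ _
  rw [← star_eq_conjTranspose]
  exact mul_mem (Unitary.star_mem hA.eigenvectorUnitary.2) hB.eigenvectorUnitary.2

end SortedEigenvalues

/-- Löwner's theorem: `‖λ↑(A) − λ↑(B)‖₂ ≤ ‖A − B‖₂` (Frobenius norm). -/
theorem loewner_eigenvalue_lipschitz {d : ℕ} {A B : Matrix (Fin d) (Fin d) ℂ}
    (hA : A.IsHermitian) (hB : B.IsHermitian) :
    Real.sqrt (∑ i, (sortedEigs hA i - sortedEigs hB i) ^ 2) ≤ ‖A - B‖ := by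
  refine Real.sqrt_le_iff.mpr ⟨norm_nonneg _, ?_⟩
  have hexpand : ∑ i, (sortedEigs hA i - sortedEigs hB i) ^ 2 =
      ∑ i, sortedEigs hA i ^ 2 + ∑ i, sortedEigs hB i ^ 2 -
        2 * ∑ i, sortedEigs hA i * sortedEigs hB i := by
    simp only [sub_sq, sum_add_distrib, sum_sub_distrib, mul_sum, mul_assoc]
    ring
  rw [hexpand, sum_sortedEigs_sq, sum_sortedEigs_sq, frobenius_norm_sub_sq, hA.eq]
  linarith [re_trace_mul_le_sum_sortedEigs_mul hA hB]
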